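/- Let (M,h) be a 3-dimensional Riemannian manifold with orthonormal triad {m, ḿ, m̂} such that all three vorticities vanish: ω_{ab} = ώ_{ab} = ω̂_{ab} = 0. Then all three crossed shear components vanish: Σ(ḿ,m̂) = Σ́(m,m̂) = Σ̂(m,ḿ) = 0; consequently the tensor s^a_{bc} built from the crossed shears vanishes. -/
import Mathlib


/-!
Pointwise formalization of the kinematic quantities of a unit vector field on a
3-dimensional Riemannian manifold.  At a fixed point, the metric is given by its
covariant components `h`, with inverse `hinv`; (co)vectors are given by their
covariant components, and `Du a b` denotes the components `∇_a u_b` of the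
covariant derivative (w.r.t. the Levi-Civita connection) of the unit covector
field `u`.  Metric compatibility of the Levi-Civita connection together with the
constancy of the scalar products of the triad is encoded through the
hypothesis that `dDot` (the covariant derivative of the scalar product of two of
the triad fields) vanishes.
-/

namespace Stmt8

noncomputable section

abbrev Idx := Fin 3
abbrev Vec := Idx → ℝ
abbrev Ten2 := Idx → Idx → ℝ

/-- Raise an index with the inverse metric: `u^a = h^{ab} u_b`. -/
def raise (hinv : Ten2) (u : Vec) : Vec := fun a => ∑ b, hinv a b * u b

/-- Scalar product of two covectors: `h^{ab} u_a v_b`. -/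
def dotInv (hinv : Ten2) (u v : Vec) : ℝ := ∑ a, ∑ b, hinv a b * u a * v b

/-- Projector orthogonal to the unit covector `u`: `P_{ab} = h_{ab} - u_a u_b`. -/
def proj (h : Ten2) (u : Vec) : Ten2 := fun a b => h a b - u a * u b

/-- Mixed projector `P^c_a = h^{ce} P_{ea}`. -/
def projMix (h hinv : Ten2) (u : Vec) : Ten2 := fun c a => ∑ e, hinv c e * proj h u e a

/-- Expansion tensor `κ_{ab} = P^c_a P^d_b ∇_{(c} u_{d)}`. -/
def expansion (h hinv : Ten2) (u : Vec) (Du : Ten2) : Ten2 := fun a b =>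
  ∑ c, ∑ d, projMix h hinv u c a * projMix h hinv u d b * ((Du c d + Du d c) / 2)

/-- Vorticity tensor `ω_{ab} = P^c_a P^d_b ∇_{[c} u_{d]}`. -/
def vorticity (h hinv : Ten2) (u : Vec) (Du : Ten2) : Ten2 := fun a b =>
  ∑ c, ∑ d, projMix h hinv u c a * projMix h hinv u d b * ((Du c d - Du d c) / 2)

/-- Expansion scalar `κ = P^{cd} κ_{cd}`. -/
def expScalar (h hinv : Ten2) (u : Vec) (Du : Ten2) : ℝ :=
  ∑ a, ∑ b, ∑ c, ∑ d, hinv a c * hinv b d * proj h u c d * expansion h hinv u Du a b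

/-- Shear tensor `Σ_{ab} = κ_{ab} - (1/2) P_{ab} κ`. -/
def shear (h hinv : Ten2) (u : Vec) (Du : Ten2) : Ten2 := fun a b =>
  expansion h hinv u Du a b - (1/2) * proj h u a b * expScalar h hinv u Du

/-- Contraction `T(v,w) = v^a w^b T_{ab}` of a covariant 2-tensor with two
raised covectors. -/
def contr2 (hinv : Ten2) (T : Ten2) (v w : Vec) : ℝ :=
  ∑ a, ∑ b, raise hinv v a * raise hinv w b * T a b

/-- Covariant derivative of the scalar product `h^{bc} u_b v_c` of two covector
fields: by metric compatibility of the Levi-Civita connection this is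
`h^{bc} (∇_a u_b v_c + u_b ∇_a v_c)`. -/
def dDot (hinv : Ten2) (u v : Vec) (Du Dv : Ten2) (a : Idx) : ℝ :=
  ∑ b, ∑ c, hinv b c * (Du a b * v c + u b * Dv a c)

/-- Symmetrized product `X_{(b} Y_{c)}` of two covectors. -/
def sympair (u v : Vec) : Ten2 := fun b c => (u b * v c + u c * v b) / 2

/-- The tensor `s^a_{bc} = 2Σ(m̂,ḿ) m^a m̂_{(b}ḿ_{c)} + 2Σ́(m̂,m) ḿ^a m̂_{(b}m_{c)}
+ 2Σ̂(m,ḿ) m̂^a m_{(b}ḿ_{c)}` built from the crossed shears of the triad. -/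
def sTen (h hinv : Ten2) (m m' m'' : Vec) (Dm Dm' Dm'' : Ten2) :
    Idx → Idx → Idx → ℝ := fun a b c =>
  2 * contr2 hinv (shear h hinv m Dm) m'' m' * raise hinv m a * sympair m'' m' b c
    + 2 * contr2 hinv (shear h hinv m' Dm') m'' m * raise hinv m' a * sympair m'' m b c
    + 2 * contr2 hinv (shear h hinv m'' Dm'') m m' * raise hinv m'' a * sympair m m' b c


section Aux

open Finset

/-- Scalar `S(x,y;D) = x^a y^b D_{ab}`. -/
def Sc (hinv : Ten2) (x y : Vec) (D : Ten2) : ℝ :=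
  ∑ a, ∑ b, raise hinv x a * raise hinv y b * D a b

lemma dotInv_symm (hinv : Ten2) (hinvsym : ∀ a b, hinv a b = hinv b a) (u v : Vec) :
    dotInv hinv u v = dotInv hinv v u := by
  simp only [dotInv, Fin.sum_univ_three]
  rw [hinvsym 0 1, hinvsym 0 2, hinvsym 1 2]
  ring

lemma sum_raise_h (h hinv : Ten2)
    (hinverse : ∀ a b, (∑ c, h a c * hinv c b) = if a = b then 1 else 0)
    (v : Vec) (e : Idx) : (∑ a, raise hinv v a * h e a) = v e := by
  have step : (∑ a, raise hinv v a * h e a) = ∑ b, (∑ c, h e c * hinv c b) * v b := by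
    simp only [raise, Fin.sum_univ_three]
    ring
  rw [step]
  simp only [hinverse]
  simp [Finset.sum_ite_eq]

lemma sum_raise_orth (hinv : Ten2) (u v : Vec) (hv : dotInv hinv u v = 0) :
    (∑ a, raise hinv v a * u a) = 0 := by
  simp only [raise, dotInv, Fin.sum_univ_three] at *
  linear_combination hv

lemma sum_raise_projMix (h hinv : Ten2)
    (hinverse : ∀ a b, (∑ c, h a c * hinv c b) = if a = b then 1 else 0)
    (u v : Vec) (hv : dotInv hinv u v = 0) (c : Idx) :
    (∑ a, raise hinv v a * projMix h hinv u c a) = raise hinv v c := by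
  have k1 : ∀ e, (∑ a, raise hinv v a * h e a) = v e := sum_raise_h h hinv hinverse v
  have k2 : (∑ a, raise hinv v a * u a) = 0 := sum_raise_orth hinv u v hv
  have expand : (∑ a, raise hinv v a * projMix h hinv u c a)
      = ∑ e, hinv c e * ((∑ a, raise hinv v a * h e a) - u e * (∑ a, raise hinv v a * u a)) := by
    simp only [projMix, proj, Fin.sum_univ_three]
    ring
  rw [expand]
  simp only [k1, k2]
  simp only [mul_zero, sub_zero]
  rfl

lemma fubini4 (v w : Vec) (P Q F : Ten2) :
    (∑ a, ∑ b, v a * w b * (∑ c, ∑ d, P c a * Q d b * F c d))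
    = ∑ c, ∑ d, (∑ a, v a * P c a) * (∑ b, w b * Q d b) * F c d := by
  simp only [Fin.sum_univ_three]
  ring

lemma contr2_vorticity (h hinv : Ten2)
    (hinverse : ∀ a b, (∑ c, h a c * hinv c b) = if a = b then 1 else 0)
    (u v w : Vec) (Du : Ten2)
    (hv : dotInv hinv u v = 0) (hw : dotInv hinv u w = 0) :
    contr2 hinv (vorticity h hinv u Du) v w
      = (Sc hinv v w Du - Sc hinv w v Du) / 2 := by
  have := fubini4 (raise hinv v) (raise hinv w) (projMix h hinv u) (projMix h hinv u)
    (fun c d => (Du c d - Du d c) / 2)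
  simp only [contr2, vorticity]
  rw [this]
  simp only [sum_raise_projMix h hinv hinverse u v hv, sum_raise_projMix h hinv hinverse u w hw]
  simp only [Sc, Fin.sum_univ_three]
  ring

lemma contr2_expansion (h hinv : Ten2)
    (hinverse : ∀ a b, (∑ c, h a c * hinv c b) = if a = b then 1 else 0)
    (u v w : Vec) (Du : Ten2)
    (hv : dotInv hinv u v = 0) (hw : dotInv hinv u w = 0) :
    contr2 hinv (expansion h hinv u Du) v w
      = (Sc hinv v w Du + Sc hinv w v Du) / 2 := by
  have := fubini4 (raise hinv v) (raise hinv w) (projMix h hinv u) (projMix h hinv u)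
    (fun c d => (Du c d + Du d c) / 2)
  simp only [contr2, expansion]
  rw [this]
  simp only [sum_raise_projMix h hinv hinverse u v hv, sum_raise_projMix h hinv hinverse u w hw]
  simp only [Sc, Fin.sum_univ_three]
  ring

lemma contr2_projsum (h hinv : Ten2)
    (hinvsym : ∀ a b, hinv a b = hinv b a)
    (hinverse : ∀ a b, (∑ c, h a c * hinv c b) = if a = b then 1 else 0)
    (u v w : Vec)
    (hv : dotInv hinv u v = 0) (hvw : dotInv hinv v w = 0) :
    (∑ a, ∑ b, raise hinv v a * raise hinv w b * proj h u a b) = 0 := by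
  have expand : (∑ a, ∑ b, raise hinv v a * raise hinv w b * proj h u a b)
      = (∑ a, raise hinv v a * (∑ b, raise hinv w b * h a b))
        - (∑ a, raise hinv v a * u a) * (∑ b, raise hinv w b * u b) := by
    simp only [proj, Fin.sum_univ_three]
    ring
  rw [expand]
  simp only [fun a => sum_raise_h h hinv hinverse w a]
  rw [sum_raise_orth hinv u v hv,
    sum_raise_orth hinv w v (by rw [dotInv_symm hinv hinvsym]; exact hvw)]
  ring

lemma contr2_shear (h hinv : Ten2)
    (hinvsym : ∀ a b, hinv a b = hinv b a)
    (hinverse : ∀ a b, (∑ c, h a c * hinv c b) = if a = b then 1 else 0)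
    (u v w : Vec) (Du : Ten2)
    (hv : dotInv hinv u v = 0) (hw : dotInv hinv u w = 0) (hvw : dotInv hinv v w = 0) :
    contr2 hinv (shear h hinv u Du) v w
      = (Sc hinv v w Du + Sc hinv w v Du) / 2 := by
  have hE := contr2_expansion h hinv hinverse u v w Du hv hw
  have hP := contr2_projsum h hinv hinvsym hinverse u v w hv hvw
  simp only [contr2, expansion, shear] at hE ⊢
  simp only [Fin.sum_univ_three] at hE hP ⊢
  linear_combination hE - (1/2 * expScalar h hinv u Du) * hP

lemma sum_raise_dDot (hinv : Ten2) (hinvsym : ∀ a b, hinv a b = hinv b a)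
    (x u v : Vec) (Du Dv : Ten2) :
    (∑ a, raise hinv x a * dDot hinv u v Du Dv a)
      = Sc hinv x v Du + Sc hinv x u Dv := by
  simp only [dDot, Sc, raise, Fin.sum_univ_three]
  rw [hinvsym 1 0, hinvsym 2 0, hinvsym 2 1]
  ring

end Aux
/-- If the three vorticities of an orthonormal triad vanish,
then the three crossed shear components vanish, and consequently the tensor
`s^a_{bc}` built from the crossed shears vanishes. -/
theorem vanishing_vorticities_imply_vanishing_crossed_shears
    (h hinv : Ten2)
    (hsym : ∀ a b, h a b = h b a)
    (hinvsym : ∀ a b, hinv a b = hinv b a)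
    (hinverse : ∀ a b, (∑ c, h a c * hinv c b) = if a = b then 1 else 0)
    (m m' m'' : Vec)
    (hu1 : dotInv hinv m m = 1) (hu2 : dotInv hinv m' m' = 1) (hu3 : dotInv hinv m'' m'' = 1)
    (ho12 : dotInv hinv m m' = 0) (ho13 : dotInv hinv m m'' = 0) (ho23 : dotInv hinv m' m'' = 0)
    (Dm Dm' Dm'' : Ten2)
    (c11 : ∀ a, dDot hinv m m Dm Dm a = 0)
    (c22 : ∀ a, dDot hinv m' m' Dm' Dm' a = 0)
    (c33 : ∀ a, dDot hinv m'' m'' Dm'' Dm'' a = 0)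
    (c12 : ∀ a, dDot hinv m m' Dm Dm' a = 0)
    (c13 : ∀ a, dDot hinv m m'' Dm Dm'' a = 0)
    (c23 : ∀ a, dDot hinv m' m'' Dm' Dm'' a = 0)
    -- all three vorticities vanish
    (hv1 : ∀ a b, vorticity h hinv m Dm a b = 0)
    (hv2 : ∀ a b, vorticity h hinv m' Dm' a b = 0)
    (hv3 : ∀ a b, vorticity h hinv m'' Dm'' a b = 0) :
    contr2 hinv (shear h hinv m Dm) m' m'' = 0
    ∧ contr2 hinv (shear h hinv m' Dm') m m'' = 0
    ∧ contr2 hinv (shear h hinv m'' Dm'') m m' = 0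
    ∧ (∀ a b c, sTen h hinv m m' m'' Dm Dm' Dm'' a b c = 0) := by
  -- symmetric orthogonality facts
  have s12 : dotInv hinv m' m = 0 := by rw [dotInv_symm hinv hinvsym]; exact ho12
  have s13 : dotInv hinv m'' m = 0 := by rw [dotInv_symm hinv hinvsym]; exact ho13
  have s23 : dotInv hinv m'' m' = 0 := by rw [dotInv_symm hinv hinvsym]; exact ho23
  -- vanishing vorticities give symmetry of the crossed `Sc` scalars
  have vsym1 : Sc hinv m' m'' Dm = Sc hinv m'' m' Dm := by
    have h0 : contr2 hinv (vorticity h hinv m Dm) m' m'' = 0 := by simp [contr2, hv1]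
    have h1 := contr2_vorticity h hinv hinverse m m' m'' Dm ho12 ho13
    rw [h0] at h1; linarith
  have vsym2 : Sc hinv m m'' Dm' = Sc hinv m'' m Dm' := by
    have h0 : contr2 hinv (vorticity h hinv m' Dm') m m'' = 0 := by simp [contr2, hv2]
    have h1 := contr2_vorticity h hinv hinverse m' m m'' Dm' s12 ho23
    rw [h0] at h1; linarith
  have vsym3 : Sc hinv m m' Dm'' = Sc hinv m' m Dm'' := by
    have h0 : contr2 hinv (vorticity h hinv m'' Dm'') m m' = 0 := by simp [contr2, hv3]
    have h1 := contr2_vorticity h hinv hinverse m'' m m' Dm'' s13 s23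
    rw [h0] at h1; linarith
  -- constancy of scalar products gives the cyclic relations
  have e12 : Sc hinv m'' m' Dm + Sc hinv m'' m Dm' = 0 := by
    have h0 : (∑ a, raise hinv m'' a * dDot hinv m m' Dm Dm' a) = 0 := by simp [c12]
    rwa [sum_raise_dDot hinv hinvsym m'' m m' Dm Dm'] at h0
  have e13 : Sc hinv m' m'' Dm + Sc hinv m' m Dm'' = 0 := by
    have h0 : (∑ a, raise hinv m' a * dDot hinv m m'' Dm Dm'' a) = 0 := by simp [c13]
    rwa [sum_raise_dDot hinv hinvsym m' m m'' Dm Dm''] at h0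
  have e23 : Sc hinv m m'' Dm' + Sc hinv m m' Dm'' = 0 := by
    have h0 : (∑ a, raise hinv m a * dDot hinv m' m'' Dm' Dm'' a) = 0 := by simp [c23]
    rwa [sum_raise_dDot hinv hinvsym m m' m'' Dm' Dm''] at h0
  -- the three crossed scalars vanish
  have hA : Sc hinv m' m'' Dm = 0 := by linarith [vsym1, vsym2, vsym3, e12, e13, e23]
  have hB : Sc hinv m m'' Dm' = 0 := by linarith [vsym1, vsym2, vsym3, e12, e13, e23]
  have hC : Sc hinv m m' Dm'' = 0 := by linarith [vsym1, vsym2, vsym3, e12, e13, e23]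
  -- crossed shear components
  have S1 : contr2 hinv (shear h hinv m Dm) m' m'' = 0 := by
    rw [contr2_shear h hinv hinvsym hinverse m m' m'' Dm ho12 ho13 ho23]
    linarith [vsym1]
  have S1' : contr2 hinv (shear h hinv m Dm) m'' m' = 0 := by
    rw [contr2_shear h hinv hinvsym hinverse m m'' m' Dm ho13 ho12 s23]
    linarith [vsym1]
  have S2 : contr2 hinv (shear h hinv m' Dm') m m'' = 0 := by
    rw [contr2_shear h hinv hinvsym hinverse m' m m'' Dm' s12 ho23 ho13]
    linarith [vsym2]
  have S2' : contr2 hinv (shear h hinv m' Dm') m'' m = 0 := by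
    rw [contr2_shear h hinv hinvsym hinverse m' m'' m Dm' ho23 s12 s13]
    linarith [vsym2]
  have S3 : contr2 hinv (shear h hinv m'' Dm'') m m' = 0 := by
    rw [contr2_shear h hinv hinvsym hinverse m'' m m' Dm'' s13 s23 ho12]
    linarith [vsym3]
  refine ⟨S1, S2, S3, fun a b c => ?_⟩
  simp [sTen, S1', S2', S3]

end
end Stmt8
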